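/- Let ρ = (ρ_i(s))_{i∈[n], s∈[k]^n} be any family of reals with ρ_i(s) ∈ (0,1] for all i and s, such that for every signal profile s there is at least one agent i with ρ_i(s) = 1. Then there exists a family of value functions v_i : [k]^n → ℝ_{>0} (i ∈ [n]) that is strictly increasing in every signal coordinate (v_i(a, s_{-j}) < v_i(b, s_{-j}) whenever a < b, for every agent i and coordinate j) and that induces the given ratios, i.e., v_i(s) / max_{j∈[n]} v_j(s) = ρ_i(s) for all i and s. Likewise, there exists a family of cost functions c_i : [k]^n → ℝ_{>0} strictly decreasing in every signal coordinate with min_{j∈[n]} c_j(s) / c_i(s) = ρ_i(s) for all i and s. -/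

import Mathlib

/-!
Let `ε > 0` be the smallest ratio and `C` a base with `ε * C > 1`, and put
`v i s = ρ i s * C ^ (∑ j, s j)`. At each profile the maximum of the `v j s` is `C ^ (∑ j, s j)`,
attained by an agent with ratio `1`, so `v` induces `ρ`. Raising one signal raises the exponent by
at least one, which multiplies the scale by `C`; since all ratios lie in `[ε, 1]` and `ε * C > 1`,
this outweighs any change of ratio, so every `v i` is strictly increasing. The costs `c = v⁻¹`
are then strictly decreasing and induce the same ratios.
-/

open Finset Function

namespace Finset

variable {ι α : Type*} {s : Finset ι} (H : s.Nonempty)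

theorem sup'_eq_of_forall_le_of_exists_eq [SemilatticeSup α] {f : ι → α} {a : α}
    (hle : ∀ i ∈ s, f i ≤ a) (heq : ∃ i ∈ s, f i = a) : s.sup' H f = a := by
  obtain ⟨i, hi, rfl⟩ := heq
  exact le_antisymm (sup'_le H f hle) (le_sup' f hi)

theorem inf'_inv_eq_inv_sup' [Field α] [LinearOrder α] [IsStrictOrderedRing α] {f : ι → α}
    (hf : ∀ i ∈ s, 0 < f i) : s.inf' H (fun i => (f i)⁻¹) = (s.sup' H f)⁻¹ := by
  obtain ⟨i, hi, hmax⟩ := exists_mem_eq_sup' H f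
  rw [hmax]
  exact le_antisymm (inf'_le _ hi)
    (le_inf' H _ fun j hj => inv_anti₀ (hf j hj) (hmax ▸ le_sup' f hj))

end Finset

theorem mul_pow_lt_mul_pow_of_lt {ε C x y : ℝ} {m n : ℕ} (hε : 0 < ε) (hC : 1 ≤ C)
    (hεC : 1 < ε * C) (hx : x ≤ 1) (hy : ε ≤ y) (hmn : m < n) : x * C ^ m < y * C ^ n := by
  have hCm : 0 < C ^ m := by positivity
  calc x * C ^ m ≤ C ^ m := mul_le_of_le_one_left hCm.le hx
    _ < ε * C * C ^ m := lt_mul_of_one_lt_left hCm hεC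
    _ = ε * C ^ (m + 1) := by ring
    _ ≤ ε * C ^ n := mul_le_mul_of_nonneg_left (pow_le_pow_right₀ hC hmn) hε.le
    _ ≤ y * C ^ n := by gcongr

section Signals

variable {ι : Type*} [Fintype ι] {k : ℕ}

def totalSignal (s : ι → Fin k) : ℕ := ∑ j, (s j : ℕ)

theorem totalSignal_update_lt_totalSignal_update [DecidableEq ι] (s : ι → Fin k) (j : ι)
    {a b : Fin k} (hab : a < b) : totalSignal (update s j a) < totalSignal (update s j b) := by
  have hsplit : ∀ x : Fin k, totalSignal (update s j x) = x + ∑ l ∈ univ \ {j}, (s l : ℕ) := by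
    intro x
    simp only [totalSignal, apply_update (fun _ (y : Fin k) => (y : ℕ))]
    exact sum_update_of_mem (mem_univ j) _ _
  rw [hsplit, hsplit]
  exact Nat.add_lt_add_right hab _

theorem exists_strictMono_value_ratio [DecidableEq ι] [Nonempty ι] [NeZero k]
    (ρ : ι → (ι → Fin k) → ℝ) (hρ : ∀ i s, 0 < ρ i s ∧ ρ i s ≤ 1) (hρ1 : ∀ s, ∃ i, ρ i s = 1) :
    ∃ v : ι → (ι → Fin k) → ℝ,
      (∀ i s, 0 < v i s) ∧
      (∀ (i j : ι) (s : ι → Fin k) (a b : Fin k), a < b →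
        v i (update s j a) < v i (update s j b)) ∧
      (∀ i s, v i s / (univ.sup' univ_nonempty (fun j => v j s)) = ρ i s) := by
  obtain ⟨p, hp⟩ := Finite.exists_min (fun p : ι × (ι → Fin k) => ρ p.1 p.2)
  set ε := ρ p.1 p.2
  have hε : 0 < ε := (hρ p.1 p.2).1
  set C := 2 / ε
  have hεC : ε * C = 2 := mul_div_cancel₀ 2 hε.ne'
  have hC : 1 ≤ C := by rw [le_div_iff₀ hε]; linarith [(hρ p.1 p.2).2]
  have hsup : ∀ s, univ.sup' univ_nonempty (fun j => ρ j s * C ^ totalSignal s)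
      = C ^ totalSignal s := fun s =>
    sup'_eq_of_forall_le_of_exists_eq _
      (fun j _ => mul_le_of_le_one_left (by positivity) (hρ j s).2)
      (by obtain ⟨i, hi⟩ := hρ1 s; exact ⟨i, mem_univ i, by rw [hi, one_mul]⟩)
  refine ⟨fun i s => ρ i s * C ^ totalSignal s, fun i s => by have := (hρ i s).1; positivity,
    fun i j s a b hab => ?_, fun i s => ?_⟩
  · exact mul_pow_lt_mul_pow_of_lt hε hC (by linarith) (hρ i _).2 (hp (i, _))
      (totalSignal_update_lt_totalSignal_update s j hab)
  · rw [hsup, mul_div_cancel_right₀ _ (by positivity)]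

end Signals

theorem stmt0 (n k : ℕ) [NeZero n] [NeZero k]
    (ρ : Fin n → (Fin n → Fin k) → ℝ)
    (hρ : ∀ i s, 0 < ρ i s ∧ ρ i s ≤ 1)
    (hρ1 : ∀ s, ∃ i, ρ i s = 1) :
    (∃ v : Fin n → (Fin n → Fin k) → ℝ,
      (∀ i s, 0 < v i s) ∧
      (∀ (i j : Fin n) (s : Fin n → Fin k) (a b : Fin k), a < b →
        v i (Function.update s j a) < v i (Function.update s j b)) ∧
      (∀ i s, v i s / (Finset.univ.sup' Finset.univ_nonempty (fun j => v j s)) = ρ i s)) ∧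
    (∃ c : Fin n → (Fin n → Fin k) → ℝ,
      (∀ i s, 0 < c i s) ∧
      (∀ (i j : Fin n) (s : Fin n → Fin k) (a b : Fin k), a < b →
        c i (Function.update s j b) < c i (Function.update s j a)) ∧
      (∀ i s, (Finset.univ.inf' Finset.univ_nonempty (fun j => c j s)) / c i s = ρ i s)) := by
  obtain ⟨v, hpos, hmono, hratio⟩ := exists_strictMono_value_ratio ρ hρ hρ1
  refine ⟨⟨v, hpos, hmono, hratio⟩, fun i s => (v i s)⁻¹, fun i s => inv_pos.mpr (hpos i s),
    fun i j s a b hab => inv_strictAnti₀ (hpos i _) (hmono i j s a b hab), fun i s => ?_⟩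
  rw [inf'_inv_eq_inv_sup' _ fun j _ => hpos j s, inv_div_inv, ← hratio]
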